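/- Let α ∈ [0,1], let p, p' be distributions and b, b' contracts, and suppose E_p[y − b] ≥ E_{p'}[y − b'] and E_{p'}[α·y − b'] ≥ E_p[α·y − b]. Then E_p[y] − E_{p'}[y] ≥ E_p[b] − E_{p'}[b'] ≥ α·(E_p[y] − E_{p'}[y]); moreover, if α < 1, then E_p[y] − E_{p'}[y] ≥ 0, and hence α·(E_p[y] − E_{p'}[y]) ≥ 0. -/
import Mathlib


open Finset

/-- Expected value of `f` under the distribution `p` on a finite state space. -/
noncomputable def expval {Ω : Type*} [Fintype Ω] (p f : Ω → ℝ) : ℝ :=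
  ∑ ω, p ω * f ω

/-- if the principal prefers `(b, p)` to `(b', p')` under full output
and prefers `(b', p')` to `(b, p)` under output scaled by `α ∈ [0,1]`, then
`E_p[y] − E_{p'}[y] ≥ E_p[b] − E_{p'}[b'] ≥ α (E_p[y] − E_{p'}[y])`; moreover if
`α < 1` then `E_p[y] − E_{p'}[y] ≥ 0` and hence `α (E_p[y] − E_{p'}[y]) ≥ 0`. -/
theorem scaled_output_inequalities {Ω : Type*} [Fintype Ω] [Nonempty Ω]
    (y b b' p p' : Ω → ℝ)
    (hp : (∀ ω, 0 ≤ p ω) ∧ ∑ ω, p ω = 1)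
    (hp' : (∀ ω, 0 ≤ p' ω) ∧ ∑ ω, p' ω = 1)
    (α : ℝ) (hα : α ∈ Set.Icc (0 : ℝ) 1)
    (h1 : expval p' (fun ω => y ω - b' ω) ≤ expval p (fun ω => y ω - b ω))
    (h2 : expval p (fun ω => α * y ω - b ω) ≤ expval p' (fun ω => α * y ω - b' ω)) :
    expval p b - expval p' b' ≤ expval p y - expval p' y ∧
    α * (expval p y - expval p' y) ≤ expval p b - expval p' b' ∧
    (α < 1 → 0 ≤ expval p y - expval p' y ∧ 0 ≤ α * (expval p y - expval p' y)) := by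
  simp only [expval, mul_sub, Finset.sum_sub_distrib, mul_left_comm, ← Finset.mul_sum] at h1 h2 ⊢
  obtain ⟨hα0, hα1⟩ := hα
  constructor
  · linarith
  constructor
  · linarith
  · intro hlt
    constructor
    · nlinarith
    · nlinarith
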